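/- arXiv:2303.11626 — 2 statements merged into one kernel-verified Lean document; each statement's English description precedes it below -/
import Mathlib

section
/- For α ∈ (0,1], the initial corrector coefficient d_j = (j−1)^{α+1} − (j−1−α) j^α is nonnegative for every integer j ≥ 1. -/
open Real

/-- for `α ∈ (0,1]`, the initial corrector coefficient
`d_j = (j-1)^{α+1} - (j-1-α) j^α` is nonnegative for every integer `j ≥ 1`. -/
theorem initial_corrector_coeff_nonneg
    (α : ℝ) (hα : 0 < α) (hα1 : α ≤ 1) (j : ℕ) (hj : 1 ≤ j) :
    0 ≤ ((j : ℝ) - 1) ^ (α + 1) - ((j : ℝ) - 1 - α) * (j : ℝ) ^ α := by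
  set n : ℝ := (j : ℝ) with hn
  have hn1 : (1 : ℝ) ≤ n := by rw [hn]; exact_mod_cast hj
  have hn0 : (0 : ℝ) < n := lt_of_lt_of_le one_pos hn1
  have hinv : 1 / n ≤ 1 := (div_le_one hn0).mpr hn1
  have hs : (-1 : ℝ) ≤ -1 / n := by
    rw [neg_div]; linarith
  have hp : (1 : ℝ) ≤ α + 1 := by linarith
  have key := one_add_mul_self_le_rpow_one_add hs hp
  -- multiply by n ^ (α+1)
  have hnp : (0 : ℝ) ≤ n ^ (α + 1) := rpow_nonneg hn0.le _
  have h2 : n ^ (α + 1) * (1 + (α + 1) * (-1 / n)) ≤ n ^ (α + 1) * (1 + -1 / n) ^ (α + 1) :=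
    mul_le_mul_of_nonneg_left key hnp
  have h3 : n ^ (α + 1) * (1 + -1 / n) ^ (α + 1) = (n - 1) ^ (α + 1) := by
    rw [← mul_rpow hn0.le (by rw [neg_div]; linarith : (0:ℝ) ≤ 1 + -1 / n)]
    congr 1
    field_simp
    ring
  have h4 : n ^ (α + 1) = n ^ α * n := by
    rw [rpow_add hn0, rpow_one]
  have h5 : n ^ (α + 1) * (1 + (α + 1) * (-1 / n)) = (n - 1 - α) * n ^ α := by
    rw [h4]; field_simp; ring
  rw [h3, h5] at h2
  linarith
end

section
/- One-step error bound for the telescoping rectangle rule: for α ∈ (0,1], h > 0, nodes t_j = jh, and an L-Lipschitz function g : [0, t_n] → ℝ, the left fractional rectangular approximation satisfies | ∫₀^{t_n} (t_n − s)^{α−1} g(s) ds − Σ_{j=0}^{n−1} g(t_j) ∫_{t_j}^{t_{j+1}} (t_n − s)^{α−1} ds | ≤ (L h / α) t_n^α. -/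
open Real MeasureTheory Finset intervalIntegral

/-- one-step error bound for the telescoping rectangle rule
underlying the fractional Euler method: for an `L`-Lipschitz `g`,
`|∫₀^{nh} (nh-s)^{α-1} g(s) ds - Σ_{j<n} g(jh) ∫_{jh}^{(j+1)h} (nh-s)^{α-1} ds|
  ≤ (L h / α) (nh)^α`. -/
theorem fractional_rectangle_rule_error
    (α h L : ℝ) (n : ℕ) (hα : 0 < α) (hα1 : α ≤ 1) (hh : 0 < h)
    (hn : 1 ≤ n) (hL : 0 ≤ L)
    (g : ℝ → ℝ) (hg : ∀ x y : ℝ, |g x - g y| ≤ L * |x - y|) :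
    |(∫ s in (0:ℝ)..(n * h), ((n : ℝ) * h - s) ^ (α - 1) * g s) -
        ∑ j ∈ Finset.range n,
          g ((j : ℝ) * h) *
            ∫ s in ((j : ℝ) * h)..(((j : ℝ) + 1) * h), ((n : ℝ) * h - s) ^ (α - 1)|
      ≤ L * h / α * ((n : ℝ) * h) ^ α := by
  set T : ℝ := (n : ℝ) * h with hT
  have hn1 : (1 : ℝ) ≤ (n : ℝ) := by exact_mod_cast hn
  have hr : (-1 : ℝ) < α - 1 := by linarith
  -- continuity of g
  have hgc : Continuous g := by
    have : LipschitzWith (Real.toNNReal L) g := by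
      apply LipschitzWith.of_dist_le_mul
      intro x y
      rw [Real.dist_eq, Real.dist_eq]
      simpa [Real.coe_toNNReal L hL] using hg x y
    exact this.continuous
  -- integrability of the kernel on any interval
  have hker : ∀ a b : ℝ, IntervalIntegrable (fun s => (T - s) ^ (α - 1)) volume a b := by
    intro a b
    have := (intervalIntegrable_rpow' (a := T - a) (b := T - b) hr).comp_sub_left T
    simpa using this
  have hkerg : ∀ a b : ℝ,
      IntervalIntegrable (fun s => (T - s) ^ (α - 1) * g s) volume a b := fun a b =>
    (hker a b).mul_continuousOn hgc.continuousOn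
  -- node function
  set a : ℕ → ℝ := fun j => (j : ℝ) * h with ha
  have hsplit :
      (∫ s in (0:ℝ)..T, (T - s) ^ (α - 1) * g s)
        = ∑ j ∈ Finset.range n, ∫ s in a j..a (j + 1), (T - s) ^ (α - 1) * g s := by
    rw [intervalIntegral.sum_integral_adjacent_intervals (fun k _ => hkerg _ _)]
    simp [ha, hT]
  have hsplitk :
      (∫ s in (0:ℝ)..T, (T - s) ^ (α - 1))
        = ∑ j ∈ Finset.range n, ∫ s in a j..a (j + 1), (T - s) ^ (α - 1) := by
    rw [intervalIntegral.sum_integral_adjacent_intervals (fun k _ => hker _ _)]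
    simp [ha, hT]
  -- value of the full kernel integral
  have hval : (∫ s in (0:ℝ)..T, (T - s) ^ (α - 1)) = T ^ α / α := by
    rw [intervalIntegral.integral_comp_sub_left (fun x => x ^ (α - 1)) T]
    simp only [sub_zero, sub_self]
    rw [integral_rpow (Or.inl hr)]
    rw [Real.zero_rpow (by linarith : α - 1 + 1 ≠ 0)]
    ring_nf
  -- per-interval error bound
  have hbound : ∀ j ∈ Finset.range n,
      |(∫ s in a j..a (j + 1), (T - s) ^ (α - 1) * g s) -
          g (a j) * ∫ s in a j..a (j + 1), (T - s) ^ (α - 1)|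
        ≤ L * h * ∫ s in a j..a (j + 1), (T - s) ^ (α - 1) := by
    intro j hj
    have hle : a j ≤ a (j + 1) := by
      simp only [ha]
      push_cast
      nlinarith
    have hconst : g (a j) * (∫ s in a j..a (j + 1), (T - s) ^ (α - 1))
        = ∫ s in a j..a (j + 1), (T - s) ^ (α - 1) * g (a j) := by
      rw [← intervalIntegral.integral_const_mul]
      simp [mul_comm]
    rw [hconst, ← intervalIntegral.integral_sub (hkerg _ _) ((hker _ _).mul_continuousOn
      continuousOn_const)]
    have h1 : |(∫ s in a j..a (j + 1), ((T - s) ^ (α - 1) * g s - (T - s) ^ (α - 1) * g (a j)))|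
        ≤ ∫ s in a j..a (j + 1), |(T - s) ^ (α - 1) * g s - (T - s) ^ (α - 1) * g (a j)| :=
      intervalIntegral.abs_integral_le_integral_abs hle
    refine h1.trans ?_
    have h2 : (∫ s in a j..a (j + 1), |(T - s) ^ (α - 1) * g s - (T - s) ^ (α - 1) * g (a j)|)
        ≤ ∫ s in a j..a (j + 1), (T - s) ^ (α - 1) * (L * h) := by
      apply intervalIntegral.integral_mono_on hle
      · exact ((hkerg _ _).sub ((hker _ _).mul_continuousOn continuousOn_const)).abs
      · exact (hker _ _).mul_continuousOn continuousOn_const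
      · intro s hs
        rw [← mul_sub, abs_mul]
        have hknn : (0:ℝ) ≤ (T - s) ^ (α - 1) := by
          have hjn : (j : ℝ) + 1 ≤ (n : ℝ) := by
            have := Finset.mem_range.mp hj
            exact_mod_cast Nat.succ_le_of_lt this
          have hsT : s ≤ T := by
            have h2 := hs.2
            have : a (j + 1) ≤ T := by
              simp only [ha, hT]
              push_cast
              nlinarith
            linarith
          exact Real.rpow_nonneg (by linarith) _
        rw [abs_of_nonneg hknn]
        apply mul_le_mul_of_nonneg_left _ hknn
        refine (hg s (a j)).trans ?_
        apply mul_le_mul_of_nonneg_left _ hL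
        rw [abs_of_nonneg (by linarith [hs.1] : (0:ℝ) ≤ s - a j)]
        have : a (j+1) - a j = h := by simp [ha]; ring
        linarith [hs.2]
    refine h2.trans ?_
    rw [← intervalIntegral.integral_const_mul]
    apply le_of_eq
    apply intervalIntegral.integral_congr
    intro s _
    ring
  -- sum up
  calc |(∫ s in (0:ℝ)..T, (T - s) ^ (α - 1) * g s) -
        ∑ j ∈ Finset.range n, g ((j:ℝ) * h) *
          ∫ s in ((j:ℝ) * h)..(((j:ℝ) + 1) * h), (T - s) ^ (α - 1)|
      = |∑ j ∈ Finset.range n,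
          ((∫ s in a j..a (j + 1), (T - s) ^ (α - 1) * g s) -
            g (a j) * ∫ s in a j..a (j + 1), (T - s) ^ (α - 1))| := by
        rw [hsplit, ← Finset.sum_sub_distrib]
        congr 1
        apply Finset.sum_congr rfl
        intro j _
        simp only [ha]
        push_cast
        ring_nf
    _ ≤ ∑ j ∈ Finset.range n,
          |(∫ s in a j..a (j + 1), (T - s) ^ (α - 1) * g s) -
            g (a j) * ∫ s in a j..a (j + 1), (T - s) ^ (α - 1)| :=
        Finset.abs_sum_le_sum_abs _ _
    _ ≤ ∑ j ∈ Finset.range n, L * h * ∫ s in a j..a (j + 1), (T - s) ^ (α - 1) :=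
        Finset.sum_le_sum hbound
    _ = L * h * ∫ s in (0:ℝ)..T, (T - s) ^ (α - 1) := by
        rw [← Finset.mul_sum, hsplitk]
    _ = L * h / α * T ^ α := by rw [hval]; ring
end
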